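/- Let B be an invertible real 2×2 matrix, J := det B, a ∈ ℝ², and F(x) := Bx + a. Let τ̂ : ℝ² → 𝕊 be a differentiable matrix field and let τ be its re-scaled contravariant Piola–Kirchhoff transform, determined by J²·τ(F(x)) = B τ̂(x) Bᵀ. Then the row-wise divergences satisfy J²·(div τ)(F(x)) = B·(div τ̂)(x) for all x ∈ ℝ². -/

import Mathlib

/-!
Solving the transform for `τ` gives `τ(z) = J⁻² B τ̂(B⁻¹(z - a)) Bᵀ`. In the row divergence of
`τ`, the factor `Bᵀ` on the right combines the partial derivatives `∂_l` into the derivative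
along the column `B e_q`; by the chain rule through `z ↦ B⁻¹(z - a)` this is just `∂_q τ̂`.
Hence only the factor `J⁻² B` on the left survives.
-/

open Matrix

noncomputable section

/-- Row-wise divergence of a matrix field: `(div τ)_k = ∂₁ τ_{k1} + ∂₂ τ_{k2}`. -/
def matDiv (τ : (Fin 2 → ℝ) → Matrix (Fin 2) (Fin 2) ℝ) (y : Fin 2 → ℝ) : Fin 2 → ℝ :=
  fun k => ∑ j : Fin 2, fderiv ℝ (fun z => τ z k j) y (Pi.single j 1)

theorem ContinuousLinearMap.sum_smul_apply_single {n F : Type*} [Fintype n] [DecidableEq n]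
    [NormedAddCommGroup F] [NormedSpace ℝ F] (T : (n → ℝ) →L[ℝ] F) (v : n → ℝ) :
    ∑ i, v i • T (Pi.single i 1) = T v := by
  conv_rhs => rw [← (Pi.basisFun ℝ n).sum_repr v]
  simp

theorem hasFDerivAt_mulVec_sub {m n : Type*} [Fintype m] [Fintype n] (C : Matrix m n ℝ)
    (a z : n → ℝ) :
    HasFDerivAt (fun z => C *ᵥ (z - a)) (LinearMap.toContinuousLinearMap C.mulVecLin) z :=
  let L := LinearMap.toContinuousLinearMap C.mulVecLin
  (L.hasFDerivAt.comp z ((hasFDerivAt_id z).sub_const a)).congr_fderiv L.comp_id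

theorem fderiv_comp_mulVec_sub_apply {m n F : Type*} [Fintype m] [Fintype n]
    [NormedAddCommGroup F] [NormedSpace ℝ F] (C : Matrix m n ℝ) (a z v : n → ℝ)
    {f : (m → ℝ) → F} (hf : DifferentiableAt ℝ f (C *ᵥ (z - a))) :
    fderiv ℝ (fun z => f (C *ᵥ (z - a))) z v = fderiv ℝ f (C *ᵥ (z - a)) (C *ᵥ v) :=
  congrArg (· v) (hf.hasFDerivAt.comp z (hasFDerivAt_mulVec_sub C a z)).fderiv

theorem fderiv_matrix_mul_mul_apply {E l m n o : Type*} [NormedAddCommGroup E]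
    [NormedSpace ℝ E] [Fintype m] [Fintype n] (M : Matrix l m ℝ) (N : Matrix n o ℝ)
    {σ : E → Matrix m n ℝ} {z : E} (hσ : ∀ p q, DifferentiableAt ℝ (fun z => σ z p q) z)
    (i : l) (j : o) (v : E) :
    fderiv ℝ (fun z => (M * σ z * N) i j) z v =
      (M * Matrix.of (fun p q => fderiv ℝ (fun z => σ z p q) z v) * N) i j := by
  have hderiv : HasFDerivAt (fun z => (M * σ z * N) i j)
      (∑ q, N q j • ∑ p, M i p • fderiv ℝ (fun z => σ z p q) z) z := by
    simp only [mul_apply]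
    exact HasFDerivAt.fun_sum fun q _ => (HasFDerivAt.fun_sum fun p _ =>
      (hσ p q).hasFDerivAt.const_mul _).mul_const _
  rw [hderiv.fderiv]
  simp [mul_apply, mul_comm]

theorem matDiv_mul_comp_affine_mul_transpose (M B C : Matrix (Fin 2) (Fin 2) ℝ)
    (hCB : C * B = 1) (a : Fin 2 → ℝ) {σ : (Fin 2 → ℝ) → Matrix (Fin 2) (Fin 2) ℝ}
    (hσ : ∀ p q, Differentiable ℝ fun y => σ y p q) (z : Fin 2 → ℝ) :
    matDiv (fun z => M * σ (C *ᵥ (z - a)) * Bᵀ) z = M *ᵥ matDiv σ (C *ᵥ (z - a)) := by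
  have hσC (p q : Fin 2) : DifferentiableAt ℝ (fun z => σ (C *ᵥ (z - a)) p q) z :=
    (hσ p q _).comp z (hasFDerivAt_mulVec_sub C a z).differentiableAt
  have hcol (p q : Fin 2) :
      ∑ l, B l q • fderiv ℝ (fun z => σ (C *ᵥ (z - a)) p q) z (Pi.single l 1) =
        fderiv ℝ (fun y => σ y p q) (C *ᵥ (z - a)) (Pi.single q 1) := by
    rw [ContinuousLinearMap.sum_smul_apply_single,
      show (fun l => B l q) = B *ᵥ Pi.single q 1 from (mulVec_single_one B q).symm,
      fderiv_comp_mulVec_sub_apply C a z _ (hσ p q _), mulVec_mulVec, hCB, one_mulVec]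
  funext k
  simp only [matDiv, fderiv_matrix_mul_mul_apply M Bᵀ hσC, mulVec, dotProduct, ← hcol,
    smul_eq_mul]
  simp only [mul_apply, of_apply, transpose_apply, Finset.mul_sum, Finset.sum_mul]
  conv_lhs => rw [Finset.sum_comm]
  conv_rhs => rw [Finset.sum_comm]
  refine Finset.sum_congr rfl fun q _ => ?_
  rw [Finset.sum_comm]
  exact Finset.sum_congr rfl fun p _ => Finset.sum_congr rfl fun l _ => by ring

theorem piola_kirchhoff_div_transform
    (B : Matrix (Fin 2) (Fin 2) ℝ) (hB : IsUnit B.det) (a : Fin 2 → ℝ)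
    (τhat τ : (Fin 2 → ℝ) → Matrix (Fin 2) (Fin 2) ℝ)
    (hdiff : ∀ k l : Fin 2, Differentiable ℝ fun y => τhat y k l)
    (hτ : ∀ y, (B.det ^ 2) • τ (B.mulVec y + a) = B * τhat y * Bᵀ) :
    ∀ y, (B.det ^ 2) • matDiv τ (B.mulVec y + a) = B.mulVec (matDiv τhat y) := by
  intro y
  have hJ : B.det ^ 2 ≠ 0 := pow_ne_zero 2 hB.ne_zero
  have hτ_eq : τ = fun z => ((B.det ^ 2)⁻¹ • B) * τhat (B⁻¹ *ᵥ (z - a)) * Bᵀ := by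
    funext z
    have h := hτ (B⁻¹ *ᵥ (z - a))
    rw [mulVec_mulVec, mul_nonsing_inv B hB, one_mulVec, sub_add_cancel] at h
    rw [smul_mul, smul_mul, ← h, smul_smul, inv_mul_cancel₀ hJ, one_smul]
  have hy : B⁻¹ *ᵥ (B *ᵥ y + a - a) = y := by
    rw [add_sub_cancel_right, mulVec_mulVec, nonsing_inv_mul B hB, one_mulVec]
  rw [hτ_eq, matDiv_mul_comp_affine_mul_transpose _ B B⁻¹ (nonsing_inv_mul B hB) a hdiff, hy,
    smul_mulVec, smul_smul, mul_inv_cancel₀ hJ, one_smul]
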